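/- arXiv:2102.08571 — 2 statements merged into one kernel-verified Lean document; each statement's English description precedes it below -/
import Mathlib

section
/- There exists a unique function V_st : X → ℝ satisfying the dynamic programming equation with optimized lookahead: V_st(x) = min_{a∈A, 1 ≤ Δt ≤ T̄} ( c̄(x,a,Δt) + β^{Δt} · ( O + E_{y∼P̄(x,a,Δt)}[V_st(y)] ) ) for all x ∈ X. -/
/-! The operator `T_O` is a `β`-contraction of `X → ℝ` in the sup metric: each branch of the
minimum is affine in `v` through an expectation, which is `1`-Lipschitz, scaled by
`β ^ Δt ≤ β` since `Δt ≥ 1`; a finite minimum of `β`-Lipschitz functions is `β`-Lipschitz.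
Banach's fixed point theorem then gives the unique fixed point. -/

/-- Expectation of `f` under a probability mass function `p` on a finite type. -/
noncomputable def expect {X : Type*} [Fintype X] (p : PMF X) (f : X → ℝ) : ℝ :=
  ∑ y, (p y).toReal * f y

/-- The classic Bellman operator `(T v)(x) = min_a ( c(x,a) + β · E_{y∼P(x,a)}[v(y)] )`. -/
noncomputable def bellman {X A : Type*} [Fintype X] [Fintype A]
    (P : X → A → PMF X) (c : X × A → ℝ) (β : ℝ) (v : X → ℝ) : X → ℝ :=
  fun x => ⨅ a : A, (c (x, a) + β * expect (P x a) v)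

/-- The skip kernel: distribution of the state after `t` steps from `x`, holding action `a`. -/
noncomputable def skip {X A : Type*} (P : X → A → PMF X) (x : X) (a : A) : ℕ → PMF X
  | 0 => PMF.pure x
  | t + 1 => (skip P x a t).bind fun y => P y a

/-- The consolidated cost `c̄(x,a,Δt) = ∑_{t=0}^{Δt−1} β^t · E_{y∼P̄(x,a,t)}[c(y,a)]`. -/
noncomputable def cbar {X A : Type*} [Fintype X]
    (P : X → A → PMF X) (c : X × A → ℝ) (β : ℝ) (x : X) (a : A) (Δt : ℕ) : ℝ :=
  ∑ t ∈ Finset.range Δt, β ^ t * expect (skip P x a t) (fun y => c (y, a))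

/-- The optimized-lookahead Bellman operator
`(T_O v)(x) = min_{a, 1 ≤ Δt ≤ T̄} ( c̄(x,a,Δt) + β^Δt ( O + E_{y∼P̄(x,a,Δt)}[v(y)] ) )`. -/
noncomputable def TO {X A : Type*} [Fintype X] [Fintype A]
    (P : X → A → PMF X) (c : X × A → ℝ) (β O : ℝ) (Tb : ℕ) (v : X → ℝ) : X → ℝ :=
  fun x => ⨅ a : A, ⨅ Δt : {n : ℕ // n ∈ Finset.Icc 1 Tb},
    (cbar P c β x a Δt.val + β ^ Δt.val * (O + expect (skip P x a Δt.val) v))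

/-- The evaluation operator of a stationary self-triggering policy `μ = (π, τ)`. -/
noncomputable def Tpol {X A : Type*} [Fintype X]
    (P : X → A → PMF X) (c : X × A → ℝ) (β O : ℝ)
    (π : X → A) (τ : X → ℕ) (v : X → ℝ) : X → ℝ :=
  fun x => cbar P c β x (π x) (τ x) + β ^ (τ x) * (O + expect (skip P x (π x) (τ x)) v)

open scoped NNReal

theorem LipschitzWith.of_forall_eval {α ι : Type*} [PseudoEMetricSpace α] [Fintype ι]
    {β : ι → Type*} [∀ i, PseudoEMetricSpace (β i)] {K : ℝ≥0} {f : α → ∀ i, β i}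
    (hf : ∀ i, LipschitzWith K fun x => f x i) : LipschitzWith K f :=
  fun x y => edist_pi_le_iff.2 fun i => hf i x y

theorem LipschitzWith.ciInf {α ι : Type*} [PseudoMetricSpace α] [Finite ι] {K : ℝ≥0}
    {f : ι → α → ℝ} (hf : ∀ i, LipschitzWith K (f i)) : LipschitzWith K fun x => ⨅ i, f i x := by
  cases isEmpty_or_nonempty ι
  · simpa only [iInf_of_isEmpty] using LipschitzWith.const' _
  refine LipschitzWith.of_le_add_mul K fun x y => ?_
  obtain ⟨i, hi⟩ := Finite.exists_min fun i => f i y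
  calc ⨅ i, f i x ≤ f i x := ciInf_le (Set.finite_range _).bddBelow i
    _ ≤ f i y + K * dist x y := (hf i).le_add_mul x y
    _ ≤ (⨅ i, f i y) + K * dist x y := by gcongr; exact le_ciInf hi

theorem PMF.sum_toReal_eq_one {X : Type*} [Fintype X] (p : PMF X) : ∑ y, (p y).toReal = 1 := by
  have h := congrArg ENNReal.toReal p.tsum_coe
  rwa [tsum_fintype, ENNReal.toReal_sum fun y _ => p.apply_ne_top y, ENNReal.toReal_one] at h

theorem lipschitzWith_expect {X : Type*} [Fintype X] (p : PMF X) : LipschitzWith 1 (expect p) := by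
  refine LipschitzWith.of_le_add fun v w => ?_
  calc expect p v = expect p w + ∑ y, (p y).toReal * (v y - w y) := by
        simp only [expect, mul_sub, Finset.sum_sub_distrib]; ring
    _ ≤ expect p w + ∑ y, (p y).toReal * dist v w := by
        gcongr with y
        exact (le_abs_self _).trans (dist_le_pi_dist v w y)
    _ = expect p w + dist v w := by rw [← Finset.sum_mul, p.sum_toReal_eq_one, one_mul]

section Lookahead

variable {X A : Type*} [Fintype X] (P : X → A → PMF X) (c : X × A → ℝ) {β : ℝ} (O : ℝ)

theorem lipschitzWith_lookahead (hβ0 : 0 ≤ β) (hβ1 : β ≤ 1) (x : X) (a : A) {Δt : ℕ}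
    (hΔt : 1 ≤ Δt) :
    LipschitzWith ⟨β, hβ0⟩ fun v => cbar P c β x a Δt + β ^ Δt * (O + expect (skip P x a Δt) v) := by
  refine LipschitzWith.of_le_add_mul _ fun v w => ?_
  have hE := (lipschitzWith_expect (skip P x a Δt)).le_add_mul v w
  have hpow : β ^ Δt ≤ β := pow_le_of_le_one hβ0 hβ1 (by omega)
  simp only [NNReal.coe_one, one_mul] at hE
  calc _ ≤ cbar P c β x a Δt + β ^ Δt * (O + (expect (skip P x a Δt) w + dist v w)) := by gcongr
    _ = cbar P c β x a Δt + β ^ Δt * (O + expect (skip P x a Δt) w) + β ^ Δt * dist v w := by ring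
    _ ≤ _ := by gcongr; exact hpow

theorem contractingWith_TO [Fintype A] (hβ0 : 0 ≤ β) (hβ1 : β < 1) (Tb : ℕ) :
    ContractingWith ⟨β, hβ0⟩ (TO P c β O Tb) :=
  ⟨hβ1, LipschitzWith.of_forall_eval fun x => LipschitzWith.ciInf fun a => LipschitzWith.ciInf
    fun Δt => lipschitzWith_lookahead P c O hβ0 hβ1.le x a (Finset.mem_Icc.1 Δt.2).1⟩

end Lookahead

theorem TO_unique_fixed_point_general {X A : Type*} [Fintype X] [Fintype A]
    (P : X → A → PMF X) (c : X × A → ℝ)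
    (β : ℝ) (hβ0 : 0 ≤ β) (hβ1 : β < 1)
    (O : ℝ) (Tb : ℕ) :
    ∃! Vst : X → ℝ, ∀ x : X, Vst x = TO P c β O Tb Vst x := by
  have hT := contractingWith_TO P c O hβ0 hβ1 Tb
  refine ⟨hT.fixedPoint _, fun x => (congrFun hT.fixedPoint_isFixedPt x).symm, fun v hv => ?_⟩
  exact hT.fixedPoint_unique (funext fun x => (hv x).symm)

theorem TO_unique_fixed_point {X A : Type*} [Fintype X] [Nonempty X] [Fintype A] [Nonempty A]
    (P : X → A → PMF X) (c : X × A → ℝ) (hc : ∀ (x : X) (a : A), 0 ≤ c (x, a))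
    (β : ℝ) (hβ0 : 0 ≤ β) (hβ1 : β < 1)
    (O : ℝ) (hO : 0 ≤ O) (Tb : ℕ) (hTb : 1 ≤ Tb) :
    ∃! Vst : X → ℝ, ∀ x : X, Vst x = TO P c β O Tb Vst x :=
  TO_unique_fixed_point_general P c β hβ0 hβ1 O Tb
end

section
/- (Consistency of policy evaluation with the classic value function.) Let V be the unique fixed point of the classic Bellman operator T, and let μ = (π, τ) be any stationary self-triggering policy with zero-penalty evaluation fixed point v^μ (the unique fixed point of (T_μ^0 v)(x) = c̄(x, π(x), τ(x)) + β^{τ(x)} · E_{y∼P̄(x, π(x), τ(x))}[v(y)]). Then V(x) ≤ v^μ(x) for every x ∈ X. -/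
open scoped BigOperators

/-!
Unrolling the Bellman inequality `V ≤ c(·, a) + β · E_{P(·, a)}[V]` for `τ(x)` steps with the
action `π(x)` held fixed gives `V ≤ T_μ^0 V`. At each state `x`, `T_μ^0` is monotone and contracts
by the factor `β ^ τ(x) < 1`, so evaluating at a state where `V - v^μ` is maximal shows that this
maximum is `≤ 0`.
-/

section Expectation

variable {X : Type*} [Fintype X]

lemma expect_pure (x : X) (f : X → ℝ) : expect (PMF.pure x) f = f x := by
  classical
  simp [expect, PMF.pure_apply, apply_ite ENNReal.toReal]

lemma expect_const (p : PMF X) (r : ℝ) : expect p (fun _ => r) = r := by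
  have hsum : ∑ y, (p y).toReal = 1 := by
    have h : ∑ y, p y = 1 := by simpa [tsum_fintype] using p.tsum_coe
    rw [← ENNReal.toReal_sum fun y _ => p.apply_ne_top y, h, ENNReal.toReal_one]
  rw [expect, ← Finset.sum_mul, hsum, one_mul]

lemma expect_mono (p : PMF X) {f g : X → ℝ} (h : ∀ y, f y ≤ g y) :
    expect p f ≤ expect p g :=
  Finset.sum_le_sum fun y _ => mul_le_mul_of_nonneg_left (h y) ENNReal.toReal_nonneg

lemma expect_add (p : PMF X) (f g : X → ℝ) :
    expect p (fun y => f y + g y) = expect p f + expect p g := by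
  simp [expect, mul_add, Finset.sum_add_distrib]

lemma expect_sub (p : PMF X) (f g : X → ℝ) :
    expect p (fun y => f y - g y) = expect p f - expect p g := by
  simp [expect, mul_sub, Finset.sum_sub_distrib]

lemma expect_const_mul (p : PMF X) (r : ℝ) (f : X → ℝ) :
    expect p (fun y => r * f y) = r * expect p f := by
  simp only [expect, Finset.mul_sum]
  exact Finset.sum_congr rfl fun y _ => by ring

lemma expect_bind (p : PMF X) (q : X → PMF X) (f : X → ℝ) :
    expect (p.bind q) f = expect p fun y => expect (q y) f := by
  have hbind : ∀ z, (p.bind q z).toReal = ∑ y, (p y).toReal * (q y z).toReal := by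
    intro z
    rw [PMF.bind_apply, tsum_fintype, ENNReal.toReal_sum fun y _ =>
      ENNReal.mul_ne_top (p.apply_ne_top y) ((q y).apply_ne_top z)]
    simp only [ENNReal.toReal_mul]
  simp only [expect, hbind, Finset.sum_mul, Finset.mul_sum, mul_assoc]
  exact Finset.sum_comm

end Expectation

section Skip

variable {X A : Type*} [Fintype X] (P : X → A → PMF X) (c : X × A → ℝ) (β : ℝ)

lemma expect_skip_succ (x : X) (a : A) (n : ℕ) (f : X → ℝ) :
    expect (skip P x a (n + 1)) f = expect (skip P x a n) fun y => expect (P y a) f :=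
  expect_bind _ _ f

lemma cbar_succ (x : X) (a : A) (n : ℕ) :
    cbar P c β x a (n + 1) =
      cbar P c β x a n + β ^ n * expect (skip P x a n) fun y => c (y, a) :=
  Finset.sum_range_succ _ n

lemma bellman_le [Fintype A] (v : X → ℝ) (x : X) (a : A) :
    bellman P c β v x ≤ c (x, a) + β * expect (P x a) v :=
  ciInf_le (Finite.bddBelow_range _) a

lemma le_cbar_add_expect_skip (hβ : 0 ≤ β) {V : X → ℝ}
    (hV : ∀ x a, V x ≤ c (x, a) + β * expect (P x a) V) (x : X) (a : A) (n : ℕ) :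
    V x ≤ cbar P c β x a n + β ^ n * expect (skip P x a n) V := by
  induction n with
  | zero => simp [cbar, skip, expect_pure]
  | succ n ih =>
    calc V x ≤ cbar P c β x a n + β ^ n * expect (skip P x a n) V := ih
      _ ≤ cbar P c β x a n + β ^ n *
          expect (skip P x a n) (fun y => c (y, a) + β * expect (P y a) V) := by
        gcongr
        exact expect_mono _ fun y => hV y a
      _ = cbar P c β x a (n + 1) + β ^ (n + 1) * expect (skip P x a (n + 1)) V := by
        rw [expect_add, expect_const_mul, cbar_succ, expect_skip_succ]
        ring

end Skip

lemma le_of_le_Tpol_of_le {X A : Type*} [Fintype X]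
    (P : X → A → PMF X) (c : X × A → ℝ) {β : ℝ} (hβ0 : 0 ≤ β) (hβ1 : β < 1) (O : ℝ)
    (π : X → A) {τ : X → ℕ} (hτ : ∀ x, 1 ≤ τ x) {u v : X → ℝ}
    (hu : ∀ x, u x ≤ Tpol P c β O π τ u x) (hv : ∀ x, Tpol P c β O π τ v x ≤ v x) (x : X) :
    u x ≤ v x := by
  obtain ⟨x₀, -, hx₀⟩ := Finset.exists_max_image Finset.univ (fun y => u y - v y)
    ⟨x, Finset.mem_univ x⟩
  set M := u x₀ - v x₀
  have hmax : ∀ y, u y - v y ≤ M := fun y => hx₀ y (Finset.mem_univ y)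
  have hcontract : M ≤ β ^ τ x₀ * M :=
    calc M ≤ Tpol P c β O π τ u x₀ - Tpol P c β O π τ v x₀ := by
          linarith [hu x₀, hv x₀]
      _ = β ^ τ x₀ * expect (skip P x₀ (π x₀) (τ x₀)) fun y => u y - v y := by
          rw [expect_sub]; simp only [Tpol]; ring
      _ ≤ β ^ τ x₀ * M := by
          gcongr
          calc _ ≤ expect (skip P x₀ (π x₀) (τ x₀)) (fun _ => M) := expect_mono _ hmax
            _ = M := expect_const _ M
  have hpow : β ^ τ x₀ < 1 := pow_lt_one₀ hβ0 hβ1 (Nat.one_le_iff_ne_zero.mp (hτ x₀))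
  have hM : M ≤ 0 := by nlinarith
  linarith [hmax x]

theorem classic_value_le_policy_value_general {X A : Type*} [Fintype X] [Fintype A]
    (P : X → A → PMF X) (c : X × A → ℝ)
    (β : ℝ) (hβ0 : 0 ≤ β) (hβ1 : β < 1)
    (Tb : ℕ)
    (V : X → ℝ) (hV : bellman P c β V = V)
    (π : X → A) (τ : X → ℕ) (hτ : ∀ x : X, 1 ≤ τ x ∧ τ x ≤ Tb)
    (vμ : X → ℝ) (hvμ : Tpol P c β 0 π τ vμ = vμ) :
    ∀ x : X, V x ≤ vμ x := by
  have hV_le_lookahead : ∀ x a, V x ≤ c (x, a) + β * expect (P x a) V := fun x a =>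
    congrFun hV x ▸ bellman_le P c β V x a
  have hV_le_Tpol : ∀ x, V x ≤ Tpol P c β 0 π τ V x := fun x => by
    simpa only [Tpol, zero_add] using
      le_cbar_add_expect_skip P c β hβ0 hV_le_lookahead x (π x) (τ x)
  exact le_of_le_Tpol_of_le P c hβ0 hβ1 0 π (fun x => (hτ x).1) hV_le_Tpol
    fun x => (congrFun hvμ x).le

theorem classic_value_le_policy_value {X A : Type*} [Fintype X] [Nonempty X] [Fintype A] [Nonempty A]
    (P : X → A → PMF X) (c : X × A → ℝ) (hc : ∀ (x : X) (a : A), 0 ≤ c (x, a))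
    (β : ℝ) (hβ0 : 0 ≤ β) (hβ1 : β < 1)
    (Tb : ℕ) (hTb : 1 ≤ Tb)
    (V : X → ℝ) (hV : bellman P c β V = V)
    (π : X → A) (τ : X → ℕ) (hτ : ∀ x : X, 1 ≤ τ x ∧ τ x ≤ Tb)
    (vμ : X → ℝ) (hvμ : Tpol P c β 0 π τ vμ = vμ) :
    ∀ x : X, V x ≤ vμ x :=
  classic_value_le_policy_value_general P c β hβ0 hβ1 Tb V hV π τ hτ vμ hvμ
end
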